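/- Let w : Fin k → ℕ. Suppose before a query comparing indices a and b, the set of relevant indices is R. Then there is an answer (merging a and b into a ball of weight w_a + w_b or |w_a − w_b|) after which the number of relevant balls is at least |R| − 2. -/
import Mathlib


/-- `b` is a majority color for the coloring `c` of balls with weights `w`. -/
def MajColor {k : ℕ} (w : Fin k → ℕ) (c : Fin k → Bool) (b : Bool) : Prop :=
  (∑ i, w i) < 2 * ∑ i ∈ Finset.univ.filter (fun i => c i = b), w i

/-- Index `i` is relevant: some coloring of the other balls is such that the two
choices of color for `i` lead to different outcomes of the majority problem. -/
def Relevant {k : ℕ} (w : Fin k → ℕ) (i : Fin k) : Prop :=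
  ∃ c : Fin k → Bool, ¬ ∀ b : Bool,
    (MajColor w (Function.update c i true) b ↔ MajColor w (Function.update c i false) b)



lemma sum_filter_update {k : ℕ} (w : Fin k → ℕ) (c : Fin k → Bool) (i : Fin k) (v b : Bool) :
    ∑ j ∈ Finset.univ.filter (fun j => Function.update c i v j = b), w j
      = (if v = b then w i else 0)
        + ∑ j ∈ (Finset.univ.erase i).filter (fun j => c j = b), w j := by
  rw [Finset.sum_filter, Finset.sum_filter,
    ← Finset.add_sum_erase Finset.univ _ (Finset.mem_univ i)]
  congr 1
  · simp
  · exact Finset.sum_congr rfl fun j hj => by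
      rw [Function.update_of_ne (Finset.ne_of_mem_erase hj)]

lemma relevant_iff {k : ℕ} (w : Fin k → ℕ) (i : Fin k) :
    Relevant w i ↔ ∃ A : Finset (Fin k), i ∉ A ∧
      2 * ∑ j ∈ A, w j ≤ ∑ j, w j ∧ ∑ j, w j < 2 * ∑ j ∈ A, w j + 2 * w i := by
  constructor
  · rintro ⟨c, hc⟩
    push_neg at hc
    obtain ⟨b, hb⟩ := hc
    unfold MajColor at hb
    rw [sum_filter_update, sum_filter_update] at hb
    refine ⟨(Finset.univ.erase i).filter (fun j => c j = b), by simp, ?_, ?_⟩ <;>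
      · rcases b with _ | _ <;> simp at hb ⊢ <;> omega
  · rintro ⟨A, hiA, h1, h2⟩
    refine ⟨fun j => decide (j ∈ A), fun h => ?_⟩
    have ht := h true
    unfold MajColor at ht
    rw [sum_filter_update, sum_filter_update] at ht
    have hA : (Finset.univ.erase i).filter (fun j => (decide (j ∈ A) : Bool) = true) = A := by
      ext j
      simp only [Finset.mem_filter, Finset.mem_erase, Finset.mem_univ, true_and,
        decide_eq_true_eq, and_true]
      constructor
      · tauto
      · intro hj; exact ⟨fun h' => hiA (h' ▸ hj), hj⟩
    rw [hA] at ht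
    simp at ht
    omega


lemma relevant_mono {k : ℕ} (w : Fin k → ℕ) {i j : Fin k} (hw : w i ≤ w j)
    (h : Relevant w i) : Relevant w j := by
  rw [relevant_iff] at h ⊢
  obtain ⟨A, hiA, h1, h2⟩ := h
  by_cases hj : j ∈ A
  · have hij : i ≠ j := fun e => hiA (e ▸ hj)
    refine ⟨insert i (A.erase j), ?_, ?_, ?_⟩
    · simp only [Finset.mem_insert, Finset.mem_erase]
      push_neg
      exact ⟨hij.symm, fun h' => absurd rfl h'⟩
    all_goals
      have hs1 : ∑ x ∈ insert i (A.erase j), w x = w i + ∑ x ∈ A.erase j, w x :=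
        Finset.sum_insert (by simp [hiA])
      have hs2 : w j + ∑ x ∈ A.erase j, w x = ∑ x ∈ A, w x :=
        Finset.add_sum_erase _ _ hj
      omega
  · exact ⟨A, hj, h1, by omega⟩

lemma preserve {k : ℕ} (w : Fin k → ℕ) (a b m : Fin k) (hab : a ≠ b)
    (hma : m ≠ a) (hmb : m ≠ b) (h : Relevant w m) :
    ∃ x : ℕ, (x = w a + w b ∨ x = ((w a : ℤ) - (w b : ℤ)).natAbs) ∧
      Relevant (Function.update (Function.update w a x) b 0) m := by
  rw [relevant_iff] at h
  obtain ⟨A, hmA, h1, h2⟩ := h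
  -- abbreviations
  set S := ∑ j, w j with hS
  set T := ∑ j ∈ A, w j with hT
  set B := (A.erase a).erase b with hB
  have haB : a ∉ B := by simp [hB]
  have hbB : b ∉ B := by simp [hB, Finset.mem_erase]
  have hmB : m ∉ B := fun h' => hmA (Finset.mem_of_mem_erase (Finset.mem_of_mem_erase h'))
  set rest := ∑ j ∈ (Finset.univ.erase a).erase b, w j with hrest
  have hSrest : S = w a + w b + rest := by
    rw [hS, hrest, ← Finset.add_sum_erase Finset.univ w (Finset.mem_univ a),
      ← Finset.add_sum_erase _ w (Finset.mem_erase.2 ⟨Ne.symm hab, Finset.mem_univ b⟩)]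
    ring
  -- generic facts about the updated weights, parametrized by x
  have key : ∀ x : ℕ,
      (∑ j, Function.update (Function.update w a x) b 0 j = x + rest) ∧
      (∑ j ∈ B, Function.update (Function.update w a x) b 0 j = ∑ j ∈ B, w j) ∧
      (∑ j ∈ insert a B, Function.update (Function.update w a x) b 0 j = x + ∑ j ∈ B, w j) ∧
      (Function.update (Function.update w a x) b 0 m = w m) := by
    intro x
    have hcong : ∀ s : Finset (Fin k), a ∉ s → b ∉ s →
        ∑ j ∈ s, Function.update (Function.update w a x) b 0 j = ∑ j ∈ s, w j := by
      intro s has hbs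
      refine Finset.sum_congr rfl fun j hj => ?_
      rw [Function.update_of_ne (fun e => hbs (by rwa [e] at hj)),
        Function.update_of_ne (fun e => has (by rwa [e] at hj))]
    have hwa : Function.update (Function.update w a x) b 0 a = x := by
      rw [Function.update_of_ne hab, Function.update_self]
    have hwb : Function.update (Function.update w a x) b 0 b = 0 := Function.update_self _ _ _
    refine ⟨?_, hcong B haB hbB, ?_, ?_⟩
    · rw [← Finset.add_sum_erase Finset.univ _ (Finset.mem_univ a),
        ← Finset.add_sum_erase _ _ (Finset.mem_erase.2 ⟨Ne.symm hab, Finset.mem_univ b⟩),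
        hwa, hwb, hcong _ (by simp [Finset.mem_erase]) (by simp [Finset.mem_erase, hab.symm]) ]
      · omega
    · rw [Finset.sum_insert haB, hwa, hcong B haB hbB]
    · rw [Function.update_of_ne hmb, Function.update_of_ne hma]
  by_cases ha : a ∈ A <;> by_cases hb : b ∈ A
  · -- both in A : answer SAME, set insert a B
    refine ⟨w a + w b, Or.inl rfl, ?_⟩
    rw [relevant_iff]
    obtain ⟨k1, k2, k3, k4⟩ := key (w a + w b)
    have e1 := Finset.add_sum_erase A w ha
    have e2 := Finset.add_sum_erase (A.erase a) w (Finset.mem_erase.2 ⟨Ne.symm hab, hb⟩)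
    have e3 : ∑ j ∈ B, w j = ∑ j ∈ (A.erase a).erase b, w j := by rw [hB]
    have hTsplit : T = w a + w b + ∑ j ∈ B, w j := by omega
    exact ⟨insert a B, by simp [hma, hmB], by omega, by omega⟩
  · -- only a in A : answer DIFF
    refine ⟨((w a : ℤ) - (w b : ℤ)).natAbs, Or.inr rfl, ?_⟩
    rw [relevant_iff]
    obtain ⟨k1, k2, k3, k4⟩ := key ((w a : ℤ) - (w b : ℤ)).natAbs
    have hBa : B = A.erase a := by
      rw [hB, Finset.erase_eq_of_notMem (by simp [Finset.mem_erase, hb])]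
    have hTsplit : T = w a + ∑ j ∈ B, w j := by
      rw [hT, hBa]; exact (Finset.add_sum_erase A w ha).symm
    by_cases hw : w b ≤ w a
    · exact ⟨insert a B, by simp [hma, hmB], by omega, by omega⟩
    · exact ⟨B, hmB, by omega, by omega⟩
  · -- only b in A : answer DIFF
    refine ⟨((w a : ℤ) - (w b : ℤ)).natAbs, Or.inr rfl, ?_⟩
    rw [relevant_iff]
    obtain ⟨k1, k2, k3, k4⟩ := key ((w a : ℤ) - (w b : ℤ)).natAbs
    have hBb : B = A.erase b := by rw [hB, Finset.erase_eq_of_notMem ha]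
    have hTsplit : T = w b + ∑ j ∈ B, w j := by
      rw [hT, hBb]; exact (Finset.add_sum_erase A w hb).symm
    by_cases hw : w b ≤ w a
    · exact ⟨B, hmB, by omega, by omega⟩
    · exact ⟨insert a B, by simp [hma, hmB], by omega, by omega⟩
  · -- neither : answer SAME, set B
    refine ⟨w a + w b, Or.inl rfl, ?_⟩
    rw [relevant_iff]
    obtain ⟨k1, k2, k3, k4⟩ := key (w a + w b)
    have hTsplit : T = ∑ j ∈ B, w j := by
      rw [hT, hB, Finset.erase_eq_of_notMem (by simp [Finset.mem_erase, hb]),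
        Finset.erase_eq_of_notMem ha]
    exact ⟨B, hmB, by omega, by omega⟩
theorem stmt_16 {k : ℕ} (w : Fin k → ℕ) (a b : Fin k) (hab : a ≠ b) :
    ∃ x : ℕ, (x = w a + w b ∨ x = ((w a : ℤ) - (w b : ℤ)).natAbs) ∧
      {i | Relevant w i}.ncard - 2 ≤
        {i | Relevant (Function.update (Function.update w a x) b 0) i}.ncard := by
  classical
  have hcard : {i | Relevant w i}.ncard ≤ ({i | Relevant w i} \ {a, b}).ncard + 2 := by
    have h1 : {i | Relevant w i}.ncard ≤ ({i | Relevant w i} \ {a, b}).ncard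
        + ({a, b} : Set (Fin k)).ncard := by
      have hsub0 : {i | Relevant w i} ⊆ ({i | Relevant w i} \ {a, b}) ∪ {a, b} := by
        intro i hi
        by_cases h : i ∈ ({a, b} : Set (Fin k))
        · exact Or.inr h
        · exact Or.inl ⟨hi, h⟩
      exact (Set.ncard_le_ncard hsub0 (Set.toFinite _)).trans (Set.ncard_union_le _ _)
    have h3 : ({a, b} : Set (Fin k)).ncard = 2 := Set.ncard_pair hab
    omega
  by_cases hne : ∃ i, Relevant w i ∧ i ≠ a ∧ i ≠ b
  · obtain ⟨i0, hi0⟩ := hne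
    set F := Finset.univ.filter (fun i => Relevant w i ∧ i ≠ a ∧ i ≠ b) with hF
    have hFne : F.Nonempty := ⟨i0, by simp [hF, hi0.1, hi0.2.1, hi0.2.2]⟩
    obtain ⟨m, hmF, hmin⟩ := F.exists_min_image w hFne
    rw [hF, Finset.mem_filter] at hmF
    obtain ⟨-, hmrel, hma, hmb⟩ := hmF
    obtain ⟨x, hx, hrel⟩ := preserve w a b m hab hma hmb hmrel
    refine ⟨x, hx, ?_⟩
    set w' := Function.update (Function.update w a x) b 0 with hw'
    have hsub : {i | Relevant w i} \ {a, b} ⊆ {i | Relevant w' i} := by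
      rintro i ⟨hi, hiab⟩
      simp only [Set.mem_insert_iff, Set.mem_singleton_iff, not_or] at hiab
      have hiF : i ∈ F := by
        rw [hF, Finset.mem_filter]
        exact ⟨Finset.mem_univ i, hi, hiab.1, hiab.2⟩
      have hwi := hmin i hiF
      have hle : w' m ≤ w' i := by
        rw [hw', Function.update_of_ne hmb, Function.update_of_ne hma,
          Function.update_of_ne hiab.2, Function.update_of_ne hiab.1]
        exact hwi
      exact relevant_mono w' hle hrel
    have := Set.ncard_le_ncard hsub (Set.toFinite _)
    omega
  · push_neg at hne
    refine ⟨w a + w b, Or.inl rfl, ?_⟩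
    have hsub : {i | Relevant w i} ⊆ ({a, b} : Set (Fin k)) := by
      intro i hi
      by_contra h
      simp only [Set.mem_insert_iff, Set.mem_singleton_iff, not_or] at h
      exact h.2 (hne i hi h.1)
    have h1 : {i | Relevant w i}.ncard ≤ 2 := by
      have := Set.ncard_le_ncard hsub (Set.toFinite _)
      rw [Set.ncard_pair hab] at this
      exact this
    omega
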